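/- Fix k ∈ ℕ, k ≥ 1, and let X : ℝ × ℝ → ℝ be the flow of the ODE ∂_t X(t,x) = (1/k)·sin(k·X(t,x)), X(0,x) = x. Then for every t ≥ 0, X(t,·) is differentiable in x and for all x ∈ ℝ: ∂_x X(t,x) = eᵗ / (cos²(kx/2) + e^{2t}·sin²(kx/2)). -/

import Mathlib

/-! With `θ = kX/2` the equation becomes `θ' = sin θ cos θ`, i.e. `(tan θ)' = tan θ`, so
`tan (k X(t,x) / 2) = eᵗ tan (k x / 2)`. Solving this for the increment `k X(t,x)/2 - k x/2`, which
stays in `(-π/2, π/2)`, via `arctan` gives a formula for `X` that is smooth in `(t, x)`. The vector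
field is Lipschitz, so uniqueness of ODE solutions identifies this formula with `X`, and
differentiating it in `x` gives the claim. -/

noncomputable section

open Real Set

theorem cos_sq_add_mul_sin_sq_pos {E : ℝ} (hE : 0 < E) (θ : ℝ) :
    0 < cos θ ^ 2 + E * sin θ ^ 2 := by
  rcases le_or_gt 1 E with h | h
  · nlinarith [sin_sq_add_cos_sq θ, sq_nonneg (sin θ)]
  · nlinarith [sin_sq_add_cos_sq θ, sq_nonneg (sin θ),
      mul_nonneg (by linarith : (0:ℝ) ≤ 1 - E) (sq_nonneg (cos θ))]

theorem sin_add_arctan_mul_cos_add_arctan (θ x : ℝ) :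
    sin (θ + arctan x) * cos (θ + arctan x) =
      (sin θ + cos θ * x) * (cos θ - sin θ * x) / (1 + x ^ 2) := by
  rw [sin_add, cos_add, sin_arctan, cos_arctan]
  field_simp
  rw [sq_sqrt (by positivity)]

/-- `tanFlowArg E θ = tan (φ - θ)`, where `tan φ = E tan θ` and `φ - θ ∈ (-π/2, π/2)`. -/
def tanFlowArg (E θ : ℝ) : ℝ := (E - 1) * sin θ * cos θ / (cos θ ^ 2 + E * sin θ ^ 2)

theorem one_add_tanFlowArg_sq {E : ℝ} (hE : 0 < E) (θ : ℝ) :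
    1 + tanFlowArg E θ ^ 2 =
      (cos θ ^ 2 + E ^ 2 * sin θ ^ 2) / (cos θ ^ 2 + E * sin θ ^ 2) ^ 2 := by
  have hD := (cos_sq_add_mul_sin_sq_pos hE θ).ne'
  rw [tanFlowArg, eq_div_iff (pow_ne_zero 2 hD), add_mul, div_pow,
    div_mul_cancel₀ _ (pow_ne_zero 2 hD)]
  linear_combination (cos θ ^ 2 + E ^ 2 * sin θ ^ 2) * sin_sq_add_cos_sq θ

theorem sin_add_arctan_tanFlowArg_mul_cos {E : ℝ} (hE : 0 < E) (θ : ℝ) :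
    sin (θ + arctan (tanFlowArg E θ)) * cos (θ + arctan (tanFlowArg E θ)) =
      E * sin θ * cos θ / (cos θ ^ 2 + E ^ 2 * sin θ ^ 2) := by
  have hD := (cos_sq_add_mul_sin_sq_pos hE θ).ne'
  have hD2 := (cos_sq_add_mul_sin_sq_pos (pow_pos hE 2) θ).ne'
  have hsin : sin θ + cos θ * tanFlowArg E θ = E * sin θ / (cos θ ^ 2 + E * sin θ ^ 2) := by
    rw [tanFlowArg, eq_div_iff hD, add_mul, mul_div_assoc', div_mul_cancel₀ _ hD]
    linear_combination E * sin θ * sin_sq_add_cos_sq θ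
  have hcos : cos θ - sin θ * tanFlowArg E θ = cos θ / (cos θ ^ 2 + E * sin θ ^ 2) := by
    rw [tanFlowArg, eq_div_iff hD, sub_mul, mul_div_assoc', div_mul_cancel₀ _ hD]
    linear_combination cos θ * sin_sq_add_cos_sq θ
  rw [sin_add_arctan_mul_cos_add_arctan, one_add_tanFlowArg_sq hE, hsin, hcos]
  field_simp

theorem hasDerivAt_tanFlowArg_left {E : ℝ} (hE : 0 < E) (θ : ℝ) :
    HasDerivAt (tanFlowArg · θ) (sin θ * cos θ / (cos θ ^ 2 + E * sin θ ^ 2) ^ 2) E := by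
  have hN : HasDerivAt (fun e => (e - 1) * sin θ * cos θ) (sin θ * cos θ) E := by
    simpa using (((hasDerivAt_id E).sub_const 1).mul_const (sin θ)).mul_const (cos θ)
  have hD : HasDerivAt (fun e => cos θ ^ 2 + e * sin θ ^ 2) (sin θ ^ 2) E := by
    simpa using ((hasDerivAt_id E).mul_const (sin θ ^ 2)).const_add (cos θ ^ 2)
  refine (hN.div hD (cos_sq_add_mul_sin_sq_pos hE θ).ne').congr_deriv ?_
  linear_combination sin θ * cos θ * sin_sq_add_cos_sq θ / (cos θ ^ 2 + E * sin θ ^ 2) ^ 2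

theorem hasDerivAt_tanFlowArg_right {E : ℝ} (hE : 0 < E) (θ : ℝ) :
    HasDerivAt (tanFlowArg E)
      ((E - 1) * (cos θ ^ 2 - E * sin θ ^ 2) / (cos θ ^ 2 + E * sin θ ^ 2) ^ 2) θ := by
  have hN : HasDerivAt (fun φ => (E - 1) * sin φ * cos φ)
      ((E - 1) * (cos θ ^ 2 - sin θ ^ 2)) θ := by
    refine (((hasDerivAt_sin θ).const_mul (E - 1)).mul (hasDerivAt_cos θ)).congr_deriv ?_
    ring
  have hD : HasDerivAt (fun φ => cos φ ^ 2 + E * sin φ ^ 2) (2 * (E - 1) * sin θ * cos θ) θ := by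
    refine (((hasDerivAt_cos θ).pow 2).add
      (((hasDerivAt_sin θ).pow 2).const_mul E)).congr_deriv ?_
    ring
  refine (hN.div hD (cos_sq_add_mul_sin_sq_pos hE θ).ne').congr_deriv ?_
  linear_combination
    (E - 1) * (cos θ ^ 2 - E * sin θ ^ 2) * sin_sq_add_cos_sq θ / (cos θ ^ 2 + E * sin θ ^ 2) ^ 2

theorem hasDerivAt_add_arctan_tanFlowArg {E : ℝ} (hE : 0 < E) (θ : ℝ) :
    HasDerivAt (fun φ => φ + arctan (tanFlowArg E φ))
      (E / (cos θ ^ 2 + E ^ 2 * sin θ ^ 2)) θ := by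
  have hD := (cos_sq_add_mul_sin_sq_pos hE θ).ne'
  have hD2 := (cos_sq_add_mul_sin_sq_pos (pow_pos hE 2) θ).ne'
  refine ((hasDerivAt_id θ).add (hasDerivAt_tanFlowArg_right hE θ).arctan).congr_deriv ?_
  rw [one_add_tanFlowArg_sq hE]
  field_simp
  linear_combination E * sin_sq_add_cos_sq θ

def tanFlow (t θ : ℝ) : ℝ := θ + arctan (tanFlowArg (exp t) θ)

theorem tanFlow_zero (θ : ℝ) : tanFlow 0 θ = θ := by
  simp [tanFlow, tanFlowArg]

theorem hasDerivAt_tanFlow_time (t θ : ℝ) :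
    HasDerivAt (tanFlow · θ) (sin (tanFlow t θ) * cos (tanFlow t θ)) t := by
  have hE := exp_pos t
  refine (((hasDerivAt_tanFlowArg_left hE θ).comp t (hasDerivAt_exp t)).arctan.const_add
    θ).congr_deriv ?_
  have hD := (cos_sq_add_mul_sin_sq_pos hE θ).ne'
  have hD2 := (cos_sq_add_mul_sin_sq_pos (pow_pos hE 2) θ).ne'
  rw [tanFlow, sin_add_arctan_tanFlowArg_mul_cos hE, Function.comp_apply,
    one_add_tanFlowArg_sq hE]
  field_simp

theorem hasDerivAt_tanFlow_space (t θ : ℝ) :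
    HasDerivAt (tanFlow t) (exp t / (cos θ ^ 2 + exp (2 * t) * sin θ ^ 2)) θ := by
  rw [two_mul, exp_add, ← sq]
  exact hasDerivAt_add_arctan_tanFlowArg (exp_pos t) θ

def sinFlow (K t x : ℝ) : ℝ := 2 / K * tanFlow t (K * x / 2)

theorem sinFlow_zero {K : ℝ} (hK : K ≠ 0) (x : ℝ) : sinFlow K 0 x = x := by
  rw [sinFlow, tanFlow_zero]
  field_simp

theorem hasDerivAt_sinFlow_time {K : ℝ} (hK : K ≠ 0) (t x : ℝ) :
    HasDerivAt (sinFlow K · x) (1 / K * sin (K * sinFlow K t x)) t := by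
  refine ((hasDerivAt_tanFlow_time t (K * x / 2)).const_mul (2 / K)).congr_deriv ?_
  have hKK : K * (2 / K * tanFlow t (K * x / 2)) = 2 * tanFlow t (K * x / 2) := by field_simp
  rw [sinFlow, hKK, sin_two_mul]
  ring

theorem hasDerivAt_sinFlow_space {K : ℝ} (hK : K ≠ 0) (t x : ℝ) :
    HasDerivAt (sinFlow K t)
      (exp t / (cos (K * x / 2) ^ 2 + exp (2 * t) * sin (K * x / 2) ^ 2)) x := by
  have hlin : HasDerivAt (fun y => K * y / 2) (K / 2) x := by
    simpa using ((hasDerivAt_id x).const_mul K).div_const 2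
  refine (((hasDerivAt_tanFlow_space t _).comp x hlin).const_mul (2 / K)).congr_deriv ?_
  field_simp

theorem lipschitzWith_one_div_mul_sin_mul {K : ℝ} (hK : K ≠ 0) :
    LipschitzWith 1 (fun y => 1 / K * sin (K * y)) := by
  refine LipschitzWith.of_dist_le_mul fun x y => ?_
  rw [Real.dist_eq, Real.dist_eq, ← mul_sub, abs_mul, NNReal.coe_one, one_mul, abs_div, abs_one]
  calc 1 / |K| * |sin (K * x) - sin (K * y)| ≤ 1 / |K| * |K * x - K * y| :=
        mul_le_mul_of_nonneg_left (abs_sin_sub_sin_le _ _) (by positivity)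
    _ = |x - y| := by rw [← mul_sub, abs_mul]; field_simp

theorem eq_sinFlow_of_hasDerivAt {K : ℝ} (hK : K ≠ 0) {f : ℝ → ℝ}
    (hf : ∀ t, HasDerivAt f (1 / K * sin (K * f t)) t) : f = (sinFlow K · (f 0)) :=
  ODE_solution_unique_univ (v := fun _ y => 1 / K * sin (K * y)) (s := fun _ => univ) (t₀ := 0)
    (fun _ => (lipschitzWith_one_div_mul_sin_mul hK).lipschitzOnWith)
    (fun t => ⟨hf t, mem_univ _⟩)
    (fun t => ⟨hasDerivAt_sinFlow_time hK t (f 0), mem_univ _⟩)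
    (sinFlow_zero hK _).symm

/-- Fix `k ≥ 1` and let `X` be the flow of the ODE
`∂ₜ X(t,x) = (1/k)·sin(k·X(t,x))`, `X(0,x) = x`.  Then for every `t ≥ 0`, `X(t,·)` is
differentiable in `x` with `∂ₓ X(t,x) = eᵗ / (cos²(kx/2) + e^{2t}·sin²(kx/2))`. -/
theorem flow_spatial_derivative (k : ℕ) (hk : 1 ≤ k) (X : ℝ → ℝ → ℝ)
    (hX0 : ∀ x : ℝ, X 0 x = x)
    (hODE : ∀ (x t : ℝ), HasDerivAt (fun s => X s x) ((1 / (k:ℝ)) * sin ((k:ℝ) * X t x)) t) :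
    ∀ t : ℝ, 0 ≤ t → ∀ x : ℝ,
      HasDerivAt (fun y => X t y)
        (exp t / (cos ((k:ℝ) * x / 2) ^ 2 + exp (2 * t) * sin ((k:ℝ) * x / 2) ^ 2)) x := by
  intro t _ x
  have hK : (k : ℝ) ≠ 0 := Nat.cast_ne_zero.mpr (by omega)
  have hX : (fun y => X t y) = sinFlow k t := funext fun y => by
    simpa [hX0] using congrFun (eq_sinFlow_of_hasDerivAt hK (hODE y)) t
  rw [hX]
  exact hasDerivAt_sinFlow_space hK t x
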